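/- Let K ≥ 1 be an integer and L ≥ K a real number. Let D = {0, L·e_1, …, L·e_K} ⊂ ℝ^K and let Δ′_D be the set of probability distributions p on D with p(L·e_i) ≤ 1/L for every i ∈ {1,…,K}. Let Π be a finite nonempty set, A : Π → ℝ, and y : Π → {1,…,K}. Let ε be a Rademacher random vector in {−1,1}^K and let Z be a random variable independent of ε with P(Z = L) = K/L and P(Z = 0) = 1 − K/L. Then sup_{p∈Δ′_D} min_{i∈{1,…,K}} E_{ĉ∼p}[ ĉ(i) + sup_{π∈Π}( A_π − ĉ(y(π)) ) ] ≤ E_{ε,Z}[ sup_{π∈Π}( A_π + 2·ε(y(π))·Z ) ]. -/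

import Mathlib

open MeasureTheory ProbabilityTheory

/-- The law of a single Rademacher (uniform `{-1,1}`-valued) real random variable. -/
noncomputable def signLaw : Measure ℝ :=
  (2⁻¹ : ENNReal) • (Measure.dirac (-1) + Measure.dirac 1)

/-- The measure on `ℝ^K` corresponding to a probability distribution `p`
supported on a finite set `D` of vectors. -/
noncomputable def vecMeas {K : ℕ} (D : Finset (Fin K → ℝ)) (p : (Fin K → ℝ) → ℝ) :
    Measure (Fin K → ℝ) :=
  ∑ v ∈ D, ENNReal.ofReal (p v) • Measure.dirac v

/-- The finite set `D = {0, L e_1, …, L e_K} ⊆ ℝ^K`. -/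
noncomputable def bigD (K : ℕ) (L : ℝ) : Finset (Fin K → ℝ) :=
  insert (0 : Fin K → ℝ) (Finset.univ.image fun i : Fin K => Pi.single i L)

/-- The law of the `{0, L}`-valued random variable `Z` with `P(Z = L) = K/L`
and `P(Z = 0) = 1 - K/L`. -/
noncomputable def zLaw (K : ℕ) (L : ℝ) : Measure ℝ :=
  ENNReal.ofReal ((K : ℝ) / L) • Measure.dirac L
    + ENNReal.ofReal (1 - (K : ℝ) / L) • Measure.dirac 0

open MeasureTheory ProbabilityTheory Finset
open scoped ENNReal

/-!
Take `i = y π₀` for a maximiser `π₀` of `A`; put `S = max A`, `q = p(L e_i)` and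
`E = E_ε[sup_π (A_π + 2 L ε(y π))]`. On `D`, `sup_π (A_π - ĉ(y π)) ≤ S` with equality at
`ĉ = 0`, so the left side is at most `(1 - q) S + q M` with `M = L + sup_π (A_π - L e_i(y π))`;
conditioning on `Z`, the right side is `(K/L) E + (1 - K/L) S`. Symmetrizing over one sign
gives `S ≤ E`, and `M ≤ E` because for `y π ≠ i` averaging over the signs at `i` and at `y π`
gives `A_π + L ≤ E`. As `q ≤ 1/L ≤ K/L`, the inequality follows.
-/

section DiracSums

variable {α ι : Type*} [MeasurableSpace α] [MeasurableSingletonClass α]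
  {t : Finset ι} {w : ι → ℝ≥0∞} (x : ι → α) (f : α → ℝ)

lemma integrable_finsetSum_smul_dirac (hw : ∀ i ∈ t, w i ≠ ∞) :
    Integrable f (∑ i ∈ t, w i • Measure.dirac (x i)) :=
  integrable_finsetSum_measure.2 fun i hi =>
    (integrable_dirac enorm_lt_top).smul_measure (hw i hi)

lemma integral_finsetSum_smul_dirac (hw : ∀ i ∈ t, w i ≠ ∞) :
    ∫ a, f a ∂(∑ i ∈ t, w i • Measure.dirac (x i)) = ∑ i ∈ t, (w i).toReal * f (x i) := by
  rw [integral_finsetSum_measure fun i hi =>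
    (integrable_dirac enorm_lt_top).smul_measure (hw i hi)]
  simp [integral_smul_measure, integral_dirac]

end DiracSums

instance : IsProbabilityMeasure signLaw :=
  ⟨by simp [signLaw, ENNReal.inv_two_add_inv_two]⟩

section Rademacher

variable {K : ℕ}

def signVec (s : Fin K → Bool) : Fin K → ℝ := fun i => if s i then 1 else -1

lemma pi_signLaw_eq :
    Measure.pi (fun _ : Fin K => signLaw)
      = ∑ s : Fin K → Bool, ((2 : ℝ≥0∞) ^ K)⁻¹ • Measure.dirac (signVec s) := by
  classical
  refine Measure.pi_eq fun t ht => ?_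
  have hsign : ∀ i, signLaw (t i)
      = ∑ b : Bool, 2⁻¹ * (t i).indicator 1 (if b then (1 : ℝ) else -1) := by
    intro i
    simp [signLaw, Measure.dirac_apply' _ (ht i), add_comm]
  simp only [hsign, Fintype.prod_sum, Measure.coe_finsetSum, Finset.sum_apply,
    Measure.smul_apply, smul_eq_mul, Measure.dirac_apply' _ (MeasurableSet.univ_pi ht),
    prod_mul_distrib, prod_const, card_univ, Fintype.card_fin, ENNReal.inv_pow]
  refine Fintype.sum_congr _ _ fun s => ?_
  congr 1
  simp [Set.indicator_apply, signVec, prod_ite_zero]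

lemma integrable_pi_signLaw (f : (Fin K → ℝ) → ℝ) :
    Integrable f (Measure.pi fun _ : Fin K => signLaw) := by
  rw [pi_signLaw_eq]
  exact integrable_finsetSum_smul_dirac _ _ fun _ _ => by simp

lemma integral_pi_signLaw (f : (Fin K → ℝ) → ℝ) :
    ∫ x, f x ∂(Measure.pi fun _ : Fin K => signLaw) = (∑ s, f (signVec s)) / 2 ^ K := by
  rw [pi_signLaw_eq, integral_finsetSum_smul_dirac _ _ fun _ _ => by simp, sum_div]
  simp [div_eq_inv_mul]

def flipAt (j : Fin K) (s : Fin K → Bool) : Fin K → Bool := Function.update s j (!s j)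

lemma flipAt_involutive (j : Fin K) : Function.Involutive (flipAt j) := by
  intro s
  ext i
  by_cases h : i = j <;> simp [flipAt, h]

lemma signVec_flipAt_self (j : Fin K) (s : Fin K → Bool) :
    signVec (flipAt j s) j = -signVec s j := by
  cases h : s j <;> simp [signVec, flipAt, h]

lemma signVec_flipAt_of_ne {i j : Fin K} (h : i ≠ j) (s : Fin K → Bool) :
    signVec (flipAt j s) i = signVec s i := by
  simp [signVec, flipAt, h]

lemma sum_le_sum_of_le_avg_flipAt (j : Fin K) {u h : (Fin K → Bool) → ℝ}
    (huh : ∀ s, 2 * u s ≤ h s + h (flipAt j s)) : ∑ s, u s ≤ ∑ s, h s := by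
  have hflip : ∑ s, h (flipAt j s) = ∑ s, h s :=
    Fintype.sum_bijective _ (flipAt_involutive j).bijective _ _ fun _ => rfl
  have := sum_le_sum fun s (_ : s ∈ univ) => huh s
  rw [← mul_sum, sum_add_distrib, hflip] at this
  linarith

lemma signVec_eq_one_or_neg_one (s : Fin K → Bool) (j : Fin K) :
    signVec s j = 1 ∨ signVec s j = -1 := by
  unfold signVec; split_ifs <;> simp

variable {f : (Fin K → ℝ) → ℝ} {c : ℝ}

lemma le_integral_pi_signLaw {a : ℝ} {j : Fin K} (hf : ∀ x, a + c * x j ≤ f x) :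
    a ≤ ∫ x, f x ∂(Measure.pi fun _ : Fin K => signLaw) := by
  rw [integral_pi_signLaw, le_div_iff₀ (by positivity)]
  have hsum : ∑ _s : Fin K → Bool, a ≤ ∑ s, f (signVec s) :=
    sum_le_sum_of_le_avg_flipAt j fun s => by
      have := hf (signVec (flipAt j s))
      rw [signVec_flipAt_self] at this
      linarith [hf (signVec s)]
  simpa [mul_comm] using hsum

/-- Averaging over `ε j₀` bounds `f` below by `max a₀ (a₁ + c ε j₁)`, and averaging this over
`ε j₁` gives at least `(a₀ + a₁ + c) / 2`. -/
lemma le_integral_pi_signLaw_of_two_coords {a₀ a₁ : ℝ} {j₀ j₁ : Fin K} (hj : j₁ ≠ j₀)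
    (ha : a₁ ≤ a₀) (hf₀ : ∀ x, a₀ + c * x j₀ ≤ f x) (hf₁ : ∀ x, a₁ + c * x j₁ ≤ f x) :
    a₁ + c / 2 ≤ ∫ x, f x ∂(Measure.pi fun _ : Fin K => signLaw) := by
  rw [integral_pi_signLaw, le_div_iff₀ (by positivity)]
  set u : (Fin K → Bool) → ℝ := fun s => max a₀ (a₁ + c * signVec s j₁)
  have hfu : ∑ s, u s ≤ ∑ s, f (signVec s) :=
    sum_le_sum_of_le_avg_flipAt j₀ fun s => by
      have h₀ := hf₀ (signVec (flipAt j₀ s))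
      have h₁ := hf₁ (signVec (flipAt j₀ s))
      rw [signVec_flipAt_self] at h₀
      rw [signVec_flipAt_of_ne hj] at h₁
      have : u s ≤ (f (signVec s) + f (signVec (flipAt j₀ s))) / 2 :=
        max_le (by linarith [hf₀ (signVec s)]) (by linarith [hf₁ (signVec s)])
      linarith
  have hu : ∑ _s : Fin K → Bool, (a₁ + c / 2) ≤ ∑ s, u s :=
    sum_le_sum_of_le_avg_flipAt j₁ fun s => by
      simp only [u, signVec_flipAt_self]
      rcases signVec_eq_one_or_neg_one s j₁ with h | h <;>
        simp only [h, neg_neg, mul_one, mul_neg]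
      · linarith [le_max_right a₀ (a₁ + c), le_max_left a₀ (a₁ + -c)]
      · linarith [le_max_left a₀ (a₁ + -c), le_max_right a₀ (a₁ + c)]
  simpa [mul_comm, add_mul] using hu.trans hfu

end Rademacher

instance (K : ℕ) (L : ℝ) : SFinite (zLaw K L) := by
  unfold zLaw; infer_instance

lemma zLaw_ne_zero (K : ℕ) (L : ℝ) : zLaw K L ≠ 0 := by
  intro h
  have := congrArg (· Set.univ) h
  simp [zLaw] at this
  linarith

lemma pi_signLaw_prod_zLaw_ne_zero (K : ℕ) (L : ℝ) :
    (Measure.pi fun _ : Fin K => signLaw).prod (zLaw K L) ≠ 0 := by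
  intro h
  have := congrArg (· Set.univ) h
  rw [← Set.univ_prod_univ, Measure.prod_prod] at this
  simp at this
  exact zLaw_ne_zero K L this

lemma integral_prod_zLaw {α : Type*} [MeasurableSpace α] (μ : Measure α) [SFinite μ]
    {K : ℕ} {L : ℝ} (hKL : 0 ≤ (K : ℝ) / L) (hKL1 : (K : ℝ) / L ≤ 1) {g : α × ℝ → ℝ}
    (hgL : Integrable (fun x => g (x, L)) μ) (hg0 : Integrable (fun x => g (x, 0)) μ) :
    ∫ q, g q ∂(μ.prod (zLaw K L))
      = K / L * ∫ x, g (x, L) ∂μ + (1 - K / L) * ∫ x, g (x, 0) ∂μ := by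
  have hint : ∀ z : ℝ, Integrable (fun x => g (x, z)) μ →
      Integrable g (Measure.map (fun x => (x, z)) μ) := fun z hz =>
    ((measurableEmbedding_prod_mk_right z).integrable_map_iff).2 hz
  rw [zLaw, Measure.prod_add, Measure.prod_smul_right, Measure.prod_smul_right,
    Measure.prod_dirac, Measure.prod_dirac,
    integral_add_measure ((hint L hgL).smul_measure ENNReal.ofReal_ne_top)
      ((hint 0 hg0).smul_measure ENNReal.ofReal_ne_top),
    integral_smul_measure, integral_smul_measure,
    (measurableEmbedding_prod_mk_right L).integral_map,
    (measurableEmbedding_prod_mk_right 0).integral_map,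
    ENNReal.toReal_ofReal hKL, ENNReal.toReal_ofReal (sub_nonneg.2 hKL1)]
  rfl

section Design

variable {K : ℕ} {L : ℝ}

lemma sum_bigD {M : Type*} [AddCommMonoid M] (hL : L ≠ 0) (g : (Fin K → ℝ) → M) :
    ∑ v ∈ bigD K L, g v = g 0 + ∑ i, g (Pi.single i L) := by
  have hinj : Function.Injective fun i : Fin K => (Pi.single i L : Fin K → ℝ) := by
    intro i i' h
    by_contra hne
    simpa [Pi.single_eq_of_ne hne, hL] using congrFun h i
  rw [bigD, sum_insert, sum_image hinj.injOn]
  simp [Pi.single_eq_zero_iff, hL]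

lemma single_mem_bigD (i : Fin K) : Pi.single i L ∈ bigD K L :=
  mem_insert_of_mem (mem_image_of_mem _ (mem_univ i))

lemma integral_vecMeas_bigD (hL : L ≠ 0) {p : (Fin K → ℝ) → ℝ} (hp : ∀ v ∈ bigD K L, 0 ≤ p v)
    (f : (Fin K → ℝ) → ℝ) :
    ∫ v, f v ∂(vecMeas (bigD K L) p) = p 0 * f 0 + ∑ i, p (Pi.single i L) * f (Pi.single i L) := by
  rw [vecMeas, integral_finsetSum_smul_dirac _ _ fun _ _ => ENNReal.ofReal_ne_top,
    ← sum_bigD hL fun v => p v * f v]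
  exact sum_congr rfl fun v hv => by rw [ENNReal.toReal_ofReal (hp v hv)]

end Design

section Policies

variable {P : Type*} [Fintype P] [Nonempty P] {K : ℕ} (A : P → ℝ) (y : P → Fin K)

def penalizedSup (v : Fin K → ℝ) : ℝ := univ.sup' univ_nonempty fun π => A π - v (y π)

def perturbedSup (L : ℝ) (x : Fin K → ℝ) : ℝ :=
  univ.sup' univ_nonempty fun π => A π + 2 * x (y π) * L

lemma penalizedSup_zero : penalizedSup A y 0 = univ.sup' univ_nonempty A := by
  simp [penalizedSup]

lemma penalizedSup_le_of_nonneg {v : Fin K → ℝ} (hv : 0 ≤ v) :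
    penalizedSup A y v ≤ univ.sup' univ_nonempty A :=
  sup'_le _ _ fun π _ => (sub_le_self _ (hv _)).trans (le_sup' A (mem_univ π))

lemma add_mul_le_perturbedSup (L : ℝ) (π : P) (x : Fin K → ℝ) :
    A π + 2 * L * x (y π) ≤ perturbedSup A y L x :=
  (le_of_eq (by ring)).trans (le_sup' (fun π => A π + 2 * x (y π) * L) (mem_univ π))

lemma le_integral_perturbedSup (L : ℝ) (π : P) :
    A π ≤ ∫ x, perturbedSup A y L x ∂(Measure.pi fun _ : Fin K => signLaw) :=
  le_integral_pi_signLaw (add_mul_le_perturbedSup A y L π)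

lemma add_le_integral_perturbedSup (L : ℝ) {π π₀ : P} (hy : y π ≠ y π₀) (hA : A π ≤ A π₀) :
    A π + L ≤ ∫ x, perturbedSup A y L x ∂(Measure.pi fun _ : Fin K => signLaw) := by
  simpa using le_integral_pi_signLaw_of_two_coords hy hA
    (add_mul_le_perturbedSup A y L π₀) (add_mul_le_perturbedSup A y L π)

lemma add_penalizedSup_single_le_integral (L : ℝ) {π₀ : P} (hπ₀ : ∀ π, A π ≤ A π₀) :
    L + penalizedSup A y (Pi.single (y π₀) L)
      ≤ ∫ x, perturbedSup A y L x ∂(Measure.pi fun _ : Fin K => signLaw) := by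
  rw [← le_sub_iff_add_le']
  refine sup'_le _ _ fun π _ => ?_
  by_cases hy : y π = y π₀
  · simpa [hy] using (hπ₀ π).trans (le_integral_perturbedSup A y L π₀)
  · simpa [Pi.single_eq_of_ne hy, le_sub_iff_add_le]
      using add_le_integral_perturbedSup A y L hy (hπ₀ π)

lemma integral_coord_add_penalizedSup_le {L : ℝ} (hL : 0 < L) {p : (Fin K → ℝ) → ℝ}
    (hp : ∀ v ∈ bigD K L, 0 ≤ p v) (hp1 : ∑ v ∈ bigD K L, p v = 1) (j : Fin K) :
    ∫ v, (v j + penalizedSup A y v) ∂(vecMeas (bigD K L) p)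
      ≤ (1 - p (Pi.single j L)) * univ.sup' univ_nonempty A
        + p (Pi.single j L) * (L + penalizedSup A y (Pi.single j L)) := by
  rw [integral_vecMeas_bigD hL.ne' hp, ← add_sum_erase _ _ (mem_univ j)]
  rw [sum_bigD hL.ne', ← add_sum_erase _ _ (mem_univ j)] at hp1
  have hrest : ∑ i ∈ univ.erase j, p (Pi.single i L)
        * ((Pi.single i L : Fin K → ℝ) j + penalizedSup A y (Pi.single i L))
      ≤ (∑ i ∈ univ.erase j, p (Pi.single i L)) * univ.sup' univ_nonempty A := by
    rw [sum_mul]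
    refine sum_le_sum fun i hi => ?_
    rw [Pi.single_eq_of_ne (ne_of_mem_erase hi).symm, zero_add]
    exact mul_le_mul_of_nonneg_left
      (penalizedSup_le_of_nonneg A y (Pi.single_nonneg.2 hL.le)) (hp _ (single_mem_bigD i))
  have hweights : (1 - p (Pi.single j L)) * univ.sup' univ_nonempty A
      = p 0 * univ.sup' univ_nonempty A
        + (∑ i ∈ univ.erase j, p (Pi.single i L)) * univ.sup' univ_nonempty A := by
    rw [← hp1]; ring
  simp only [Pi.zero_apply, zero_add, penalizedSup_zero, Pi.single_eq_same]
  linarith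

variable {Ω : Type*} [MeasurableSpace Ω] {μ : Measure Ω} {eps : Ω → Fin K → ℝ} {Z : Ω → ℝ}
  {L : ℝ}

lemma integral_sup_eq_of_law (hlaw : Measure.map (fun ω => (eps ω, Z ω)) μ
      = (Measure.pi fun _ : Fin K => signLaw).prod (zLaw K L))
    (hKL : 0 ≤ (K : ℝ) / L) (hKL1 : (K : ℝ) / L ≤ 1) :
    ∫ ω, univ.sup' univ_nonempty (fun π => A π + 2 * eps ω (y π) * Z ω) ∂μ
      = K / L * ∫ x, perturbedSup A y L x ∂(Measure.pi fun _ : Fin K => signLaw)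
        + (1 - K / L) * univ.sup' univ_nonempty A := by
  have hg : Continuous fun q : (Fin K → ℝ) × ℝ =>
      univ.sup' univ_nonempty fun π => A π + 2 * q.1 (y π) * q.2 :=
    Continuous.finset_sup'_apply _ fun π _ => by fun_prop
  have hpair : AEMeasurable (fun ω => (eps ω, Z ω)) μ :=
    .of_map_ne_zero (hlaw ▸ pi_signLaw_prod_zLaw_ne_zero K L)
  rw [← integral_map hpair hg.aestronglyMeasurable, hlaw,
    integral_prod_zLaw _ hKL hKL1 (integrable_pi_signLaw _) (integrable_pi_signLaw _)]
  simp [perturbedSup]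

end Policies

theorem stmt9_general (K : ℕ) (hK : 1 ≤ K) (L : ℝ) (hL : (K : ℝ) ≤ L)
    {P : Type*} [Fintype P] [Nonempty P] (A : P → ℝ) (y : P → Fin K)
    {Ω : Type*} [MeasurableSpace Ω] (μ : Measure Ω)
    (eps : Ω → Fin K → ℝ) (Z : Ω → ℝ)
    (hlaw : Measure.map (fun ω => (eps ω, Z ω)) μ
      = (Measure.pi fun _ : Fin K => signLaw).prod (zLaw K L)) :
    ∀ p : (Fin K → ℝ) → ℝ,
      (∀ v ∈ bigD K L, 0 ≤ p v) → ∑ v ∈ bigD K L, p v = 1 →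
      (∀ i : Fin K, p (Pi.single i L) ≤ 1 / L) →
      Finset.univ.inf' (Finset.univ_nonempty_iff.mpr (Fin.pos_iff_nonempty.mp hK))
        (fun i => ∫ v, (v i + Finset.univ.sup' Finset.univ_nonempty
            (fun π => A π - v (y π))) ∂(vecMeas (bigD K L) p))
      ≤ ∫ ω, Finset.univ.sup' Finset.univ_nonempty
          (fun π => A π + 2 * eps ω (y π) * Z ω) ∂μ := by
  intro p hp hp1 hpL
  have hK1 : (1 : ℝ) ≤ K := by exact_mod_cast hK
  have hL0 : 0 < L := by linarith
  have hKL1 : (K : ℝ) / L ≤ 1 := (div_le_one hL0).2 hL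
  obtain ⟨π₀, -, hπ₀⟩ := exists_mem_eq_sup' univ_nonempty A
  have hA : ∀ π, A π ≤ A π₀ := fun π => hπ₀ ▸ le_sup' A (mem_univ π)
  have hSE := hπ₀ ▸ le_integral_perturbedSup A y L π₀
  have hME := add_penalizedSup_single_le_integral A y L hA
  have hq0 : 0 ≤ p (Pi.single (y π₀) L) := hp _ (single_mem_bigD _)
  have hqK : p (Pi.single (y π₀) L) ≤ K / L :=
    (hpL _).trans (div_le_div_of_nonneg_right hK1 hL0.le)
  rw [integral_sup_eq_of_law A y hlaw (by positivity) hKL1]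
  refine (inf'_le _ (mem_univ (y π₀))).trans <|
    (integral_coord_add_penalizedSup_le A y hL0 hp hp1 (y π₀)).trans ?_
  linarith [mul_le_mul_of_nonneg_left hME hq0, mul_le_mul_of_nonneg_right hqK (sub_nonneg.2 hSE)]

/-- **Core minimax inequality of the admissibility proof.**
Let `K ≥ 1`, `L ≥ K`, `D = {0, L e_1, …, L e_K}` and let `Δ'_D` be the set of
probability distributions `p` on `D` with `p(L e_i) ≤ 1/L` for all `i`. Let `ε` be a
Rademacher random vector in `{-1,1}^K` and `Z` independent of `ε` with
`P(Z = L) = K/L`, `P(Z = 0) = 1 - K/L` (encoded by the product-form joint law). Then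
`sup_{p ∈ Δ'_D} min_i E_{ĉ∼p}[ĉ(i) + sup_π (A_π - ĉ(y(π)))]
  ≤ E_{ε,Z}[sup_π (A_π + 2 ε(y(π)) Z)]`,
the supremum over `p` being expressed by quantifying over all `p ∈ Δ'_D`. -/
theorem stmt9 (K : ℕ) (hK : 1 ≤ K) (L : ℝ) (hL : (K : ℝ) ≤ L)
    {P : Type*} [Fintype P] [Nonempty P] (A : P → ℝ) (y : P → Fin K)
    {Ω : Type*} [MeasurableSpace Ω] (μ : Measure Ω) [IsProbabilityMeasure μ]
    (eps : Ω → Fin K → ℝ) (Z : Ω → ℝ)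
    (heps_meas : Measurable eps) (hZ_meas : Measurable Z)
    (hlaw : Measure.map (fun ω => (eps ω, Z ω)) μ
      = (Measure.pi fun _ : Fin K => signLaw).prod (zLaw K L)) :
    ∀ p : (Fin K → ℝ) → ℝ,
      (∀ v ∈ bigD K L, 0 ≤ p v) → ∑ v ∈ bigD K L, p v = 1 →
      (∀ i : Fin K, p (Pi.single i L) ≤ 1 / L) →
      Finset.univ.inf' (Finset.univ_nonempty_iff.mpr (Fin.pos_iff_nonempty.mp hK))
        (fun i => ∫ v, (v i + Finset.univ.sup' Finset.univ_nonempty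
            (fun π => A π - v (y π))) ∂(vecMeas (bigD K L) p))
      ≤ ∫ ω, Finset.univ.sup' Finset.univ_nonempty
          (fun π => A π + 2 * eps ω (y π) * Z ω) ∂μ :=
  stmt9_general K hK L hL A y μ eps Z hlaw
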